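/- For every k ≥ 0, the number of distinct square factors of W_{k+1} equals ⌊k/2⌋ · ⌈k/2⌉. -/

import Mathlib

/-- The morphism `phi` on the alphabet `ℕ`: `phi (2i) = (2i)(2i+1)` and `phi (2i+1) = (2i+2)`. -/
def phi (a : ℕ) : List ℕ := if a % 2 = 0 then [a, a + 1] else [a + 1]

/-- The finite ZWW words: `W n = phi^n(0)`, so `W 0 = 0`, `W 1 = 01`, `W 2 = 012`, `W 3 = 01223`. -/
def W (n : ℕ) : List ℕ := (fun w => w.flatMap phi)^[n] [0]

/-!
Write `σ` for `shift` (add `2` to every letter) and `Y k = W 0 ⋯ W (k-1)` for `concatW k`.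
Then `W (k+1) = 0 1 σ(Y k)`, and every block `W j` of `Y k` begins with its only `0`.
A square factor of `Y k` containing `0` therefore has its zeros at block boundaries, which
forces it to be `W c W c` with `c + 2 ≤ k`; a `0`-free square lies in a block tail
`1 σ(Y (k-2))`, hence is `σ` of a square of `Y (k-2)`. So the squares of `Y k` are the
`σ^i (W j W j)` with `2i + j + 2 ≤ k`, pairwise distinct by first letter and length, and the
squares of `W (k+1)` are their images under `σ`.
-/

open List

namespace List

variable {α : Type*}

theorem append_self_injective : Function.Injective fun l : List α ↦ l ++ l :=
  fun _ _ h ↦ (append_inj h <| by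
    have := congrArg length h
    rw [length_append, length_append] at this
    omega).1

theorem eq_nil_of_prefix_cons_of_notMem {l ys : List α} {a : α} (h : l <+: a :: ys)
    (ha : a ∉ l) : l = [] := by
  cases l with
  | nil => rfl
  | cons b l => exact absurd ((cons_prefix_cons.mp h).1 ▸ mem_cons_self) ha

theorem infix_or_infix_of_infix_append_cons_of_notMem {u xs ys : List α} {a : α}
    (h : u <:+: xs ++ a :: ys) (ha : a ∉ u) : u <:+: xs ∨ u <:+: ys := by
  rcases infix_append_iff.mp h with hx | hy | ⟨l₁, l₂, rfl, hl₁, hl₂⟩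
  · exact .inl hx
  · rcases infix_cons_iff.mp hy with hp | hy
    · exact .inl (by rw [eq_nil_of_prefix_cons_of_notMem hp ha]; exact nil_infix)
    · exact .inr hy
  · have : l₂ = [] := eq_nil_of_prefix_cons_of_notMem hl₂ (fun h ↦ ha (mem_append_right _ h))
    subst this
    exact .inl (by simpa using hl₁.isInfix)

theorem infix_of_infix_cons_of_notMem {u ys : List α} {a : α} (h : u <:+: a :: ys)
    (ha : a ∉ u) : u <:+: ys := by
  rcases infix_or_infix_of_infix_append_cons_of_notMem (xs := []) h ha with h | h
  · rw [infix_nil.mp h]; exact nil_infix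
  · exact h

theorem square_infix_of_square_infix_cons [BEq α] [LawfulBEq α] {v ys : List α} {a : α}
    (h : v ++ v <:+: a :: ys) (ha : a ∉ ys) : v ++ v <:+: ys := by
  refine infix_of_infix_cons_of_notMem h fun hv ↦ ?_
  have hle := h.count_le a
  rw [count_append, count_cons_self, count_eq_zero.mpr ha] at hle
  have : 0 < v.count a := count_pos_iff.mpr (by simpa using hv)
  omega

theorem eq_flatten_take_of_flatten_eq_append_cons [BEq α] [LawfulBEq α] {a : α} :
    ∀ {L : List (List α)}, (∀ b ∈ L, ∃ t, b = a :: t ∧ a ∉ t) → ∀ {x z : List α},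
      L.flatten = x ++ a :: z → x = (L.take (x.count a)).flatten
  | [], _, x, z, h => by simp at h
  | b :: L, hL, x, z, h => by
    obtain ⟨t, rfl, ht⟩ := hL b mem_cons_self
    cases x with
    | nil => simp
    | cons y x =>
      obtain ⟨rfl, htail⟩ : a = y ∧ t ++ L.flatten = x ++ a :: z := by simpa using h
      rcases append_eq_append_iff.mp htail with ⟨m, rfl, hm⟩ | ⟨m, rfl, hm⟩
      · have hL' := eq_flatten_take_of_flatten_eq_append_cons
          (fun b hb ↦ hL b (mem_cons_of_mem _ hb)) hm
        simp only [count_cons_self, count_append, count_eq_zero.mpr ht, zero_add,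
          take_succ_cons, flatten_cons, cons_append]
        rw [← hL']
      · cases m with
        | nil => simp [count_eq_zero.mpr (by simpa using ht)]
        | cons c m =>
          obtain ⟨rfl, -⟩ : a = c ∧ z = m ++ L.flatten := by simpa using hm
          simp at ht

end List

def shift (w : List ℕ) : List ℕ := w.map (· + 2)

def concatW (n : ℕ) : List ℕ := (range n).flatMap W

theorem shift_append (v w : List ℕ) : shift (v ++ w) = shift v ++ shift w := map_append

theorem shift_injective : Function.Injective shift :=
  map_injective_iff.mpr (add_left_injective 2)

theorem two_le_of_mem_shift {a : ℕ} {w : List ℕ} (h : a ∈ shift w) : 2 ≤ a := by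
  obtain ⟨b, -, rfl⟩ := mem_map.mp h
  omega

theorem phi_add_two (a : ℕ) : phi (a + 2) = shift (phi a) := by
  unfold phi shift
  split_ifs <;> simp_all [Nat.add_mod_right]

theorem flatMap_phi_shift (w : List ℕ) : (shift w).flatMap phi = shift (w.flatMap phi) := by
  induction w with
  | nil => rfl
  | cons a w ih =>
    rw [flatMap_cons, shift_append, ← ih, ← phi_add_two]
    rfl

theorem W_succ (n : ℕ) : W (n + 1) = (W n).flatMap phi :=
  Function.iterate_succ_apply' _ _ _

theorem W_add_two (n : ℕ) : W (n + 2) = W (n + 1) ++ shift (W n) := by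
  induction n with
  | zero => decide
  | succ n ih =>
    rw [W_succ (n + 2), ih, flatMap_append, flatMap_phi_shift, ← W_succ, ← W_succ, ih]

theorem concatW_succ (n : ℕ) : concatW (n + 1) = concatW n ++ W n := by
  simp [concatW, range_succ]

theorem W_succ_eq_cons_cons_shift (n : ℕ) : W (n + 1) = 0 :: 1 :: shift (concatW n) := by
  induction n with
  | zero => decide
  | succ n ih => rw [W_add_two, ih, concatW_succ, shift_append]; rfl

theorem W_eq_zero_cons (n : ℕ) : W n = 0 :: (W n).tail := by
  cases n with
  | zero => rfl
  | succ n => rw [W_succ_eq_cons_cons_shift]; rfl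

theorem W_ne_nil (n : ℕ) : W n ≠ [] := by
  rw [W_eq_zero_cons]; exact cons_ne_nil _ _

theorem zero_notMem_tail_W (n : ℕ) : 0 ∉ (W n).tail := by
  cases n with
  | zero => simp [W]
  | succ n =>
    rw [W_succ_eq_cons_cons_shift, tail_cons, mem_cons, not_or]
    exact ⟨by omega, fun h ↦ by have := two_le_of_mem_shift h; omega⟩

theorem tail_W_succ (n : ℕ) : (W (n + 1)).tail = 1 :: shift (concatW n) := by
  rw [W_succ_eq_cons_cons_shift]; rfl

theorem count_zero_W (n : ℕ) : (W n).count 0 = 1 := by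
  rw [W_eq_zero_cons, count_cons_self, count_eq_zero.mpr (zero_notMem_tail_W n)]

theorem count_zero_concatW (n : ℕ) : (concatW n).count 0 = n := by
  induction n with
  | zero => rfl
  | succ n ih => rw [concatW_succ, count_append, ih, count_zero_W]

theorem getLast?_W : ∀ n, (W n).getLast? = some n
  | 0 => rfl
  | 1 => rfl
  | n + 2 => by simp [W_add_two, shift, getLast?_W n]

theorem getLast?_concatW_succ (n : ℕ) : (concatW (n + 1)).getLast? = some n := by
  rw [concatW_succ, getLast?_append_of_ne_nil _ (W_ne_nil n), getLast?_W]

theorem length_W_strictMono : StrictMono fun n ↦ (W n).length := by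
  refine strictMono_nat_of_lt_succ fun n ↦ ?_
  cases n with
  | zero => decide
  | succ n =>
    rw [W_add_two, length_append, shift, length_map]
    have := length_pos_iff.mpr (W_ne_nil n)
    omega

theorem W_injective : Function.Injective W :=
  fun _ _ h ↦ length_W_strictMono.injective (congrArg length h)

theorem W_prefix_W_succ : ∀ n, W n <+: W (n + 1)
  | 0 => ⟨[1], rfl⟩
  | n + 1 => by rw [W_add_two]; exact prefix_append _ _

theorem tail_W_prefix_tail_W_succ (n : ℕ) : (W n).tail <+: (W (n + 1)).tail := by
  have h := W_prefix_W_succ n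
  rw [W_eq_zero_cons n, W_eq_zero_cons (n + 1)] at h
  exact (cons_prefix_cons.mp h).2

theorem concatW_prefix_of_le {m n : ℕ} (h : m ≤ n) : concatW m <+: concatW n := by
  obtain ⟨d, rfl⟩ := Nat.exists_eq_add_of_le h
  rw [concatW, concatW, range_add, flatMap_append]
  exact prefix_append _ _

theorem shift_concatW_suffix_W_succ (n : ℕ) : shift (concatW n) <:+ W (n + 1) := by
  rw [W_succ_eq_cons_cons_shift]; exact suffix_cons_iff.mpr (.inr (suffix_cons _ _))

theorem eq_concatW_of_eq_append_zero_cons {k : ℕ} {x z : List ℕ}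
    (h : concatW k = x ++ 0 :: z) : x = concatW (x.count 0) := by
  have hblocks : ∀ b ∈ (range k).map W, ∃ t, b = 0 :: t ∧ 0 ∉ t := by
    intro b hb
    obtain ⟨n, -, rfl⟩ := mem_map.mp hb
    exact ⟨_, W_eq_zero_cons n, zero_notMem_tail_W n⟩
  have hx : x = concatW (min (x.count 0) k) := by
    rw [concatW, flatMap_def, ← take_range, map_take]
    exact eq_flatten_take_of_flatten_eq_append_cons hblocks h
  have hc : min (x.count 0) k = x.count 0 := by
    have := congrArg (count 0) hx
    rw [count_zero_concatW] at this
    omega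
  rwa [hc] at hx

theorem zero_cons_eq_W_of_eq_append {k : ℕ} {x y z : List ℕ}
    (h : concatW k = x ++ 0 :: y ++ 0 :: z) (hy : 0 ∉ y) : 0 :: y = W (x.count 0) := by
  have hx := eq_concatW_of_eq_append_zero_cons (x := x) (z := y ++ 0 :: z) (by rw [h]; simp)
  have hxy := eq_concatW_of_eq_append_zero_cons h
  rw [count_append, count_cons_self, count_eq_zero.mpr hy, concatW_succ, ← hx] at hxy
  exact append_cancel_left hxy

theorem eq_W_of_square_infix_concatW {k : ℕ} {u : List ℕ} (h : u ++ u <:+: concatW k)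
    (h0 : 0 ∈ u) : ∃ c, c + 2 ≤ k ∧ u = W c := by
  obtain ⟨pre, post, hk⟩ := h
  obtain ⟨α, β, rfl, hα⟩ := eq_append_cons_of_mem h0
  have hcount : count 0 (pre ++ α) = count 0 pre := by
    rw [count_append, count_eq_zero.mpr hα, add_zero]
  by_cases hβ : 0 ∈ β
  · exfalso
    obtain ⟨β₁, β₂, rfl, hβ₁⟩ := eq_append_cons_of_mem hβ
    -- `0 :: β₁` is a whole block in each copy of `u`, and these two blocks are distinct `W`s
    have e₁ := zero_cons_eq_W_of_eq_append (x := pre ++ α)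
      (z := β₂ ++ α ++ 0 :: β₁ ++ 0 :: β₂ ++ post) (by rw [← hk]; simp) hβ₁
    have e₂ := zero_cons_eq_W_of_eq_append (x := pre ++ (α ++ 0 :: (β₁ ++ 0 :: β₂)) ++ α)
      (z := β₂ ++ post) (by rw [← hk]; simp) hβ₁
    have := W_injective (e₁.symm.trans e₂)
    simp [count_append] at this
  · have hW := zero_cons_eq_W_of_eq_append (x := pre ++ α) (y := β ++ α) (z := β ++ post)
      (by rw [← hk]; simp) (by simp [hα, hβ])
    refine ⟨count 0 pre, ?_, ?_⟩
    · have := congrArg (count 0) hk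
      simp only [append_assoc, cons_append, count_append, count_cons_self,
        count_zero_concatW] at this
      omega
    · -- with `c = count 0 pre`, a nonempty `α` would end with the last letters of
      -- `concatW c` and of `W c`, which are `c - 1` and `c`
      obtain rfl : α = [] := by
        by_contra hne
        have hpre := eq_concatW_of_eq_append_zero_cons (x := pre ++ α)
          (z := β ++ α ++ 0 :: β ++ post) (by rw [← hk]; simp)
        rw [hcount] at hpre hW
        have hlast : α.getLast? = some (count 0 pre) := by
          rw [← getLast?_W, ← hW, ← cons_append, getLast?_append_of_ne_nil _ hne]
        cases hc : count 0 pre with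
        | zero =>
          rw [hc] at hpre
          exact hne (append_eq_nil_iff.mp hpre).2
        | succ c =>
          have := getLast?_concatW_succ c
          rw [← hc, ← hpre, getLast?_append_of_ne_nil _ hne, hlast, hc] at this
          simp at this
      simpa [hcount] using hW

theorem infix_tail_W_of_zero_notMem {k : ℕ} {u : List ℕ} (h : u <:+: concatW (k + 1))
    (h0 : 0 ∉ u) : u <:+: (W k).tail := by
  rw [concatW_succ, W_eq_zero_cons k] at h
  rcases infix_or_infix_of_infix_append_cons_of_notMem h h0 with h | h
  · cases k with
    | zero => rw [infix_nil.mp h]; exact nil_infix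
    | succ k =>
      exact (infix_tail_W_of_zero_notMem h h0).trans (tail_W_prefix_tail_W_succ k).isInfix
  · exact h

theorem exists_shift_of_square_infix_shift {u w : List ℕ} (h : u ++ u <:+: shift w) :
    ∃ v, u = shift v ∧ v ++ v <:+: w := by
  obtain ⟨l, hl, hmap⟩ := infix_map_iff.mp h
  obtain ⟨l₁, l₂, rfl, h₁, h₂⟩ := map_eq_append_iff.mp hmap.symm
  obtain rfl : l₁ = l₂ := shift_injective (h₁.trans h₂.symm)
  exact ⟨l₁, h₁.symm, hl⟩

theorem exists_shift_of_square_infix_tail_W {k : ℕ} {u : List ℕ}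
    (h : u ++ u <:+: (W (k + 1)).tail) : ∃ v, u = shift v ∧ v ++ v <:+: concatW k := by
  rw [tail_W_succ] at h
  refine exists_shift_of_square_infix_shift (square_infix_of_square_infix_cons h fun h1 ↦ ?_)
  have := two_le_of_mem_shift h1
  omega

def squares {α : Type*} (w : List α) : Set (List α) :=
  {u | (∃ v, v ≠ [] ∧ u = v ++ v) ∧ u <:+: w}

theorem squares_W_succ (k : ℕ) : squares (W (k + 1)) = shift '' squares (concatW k) := by
  ext u
  constructor
  · rintro ⟨⟨v, hv, rfl⟩, h⟩
    rw [W_eq_zero_cons] at h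
    obtain ⟨v', rfl, hv'⟩ := exists_shift_of_square_infix_tail_W
      (square_infix_of_square_infix_cons h (zero_notMem_tail_W _))
    exact ⟨v' ++ v', ⟨⟨v', by rintro rfl; exact hv rfl, rfl⟩, hv'⟩, shift_append _ _⟩
  · rintro ⟨_, ⟨⟨v, hv, rfl⟩, h⟩, rfl⟩
    refine ⟨⟨shift v, by simpa [shift] using hv, shift_append _ _⟩, ?_⟩
    exact (h.map _).trans (shift_concatW_suffix_W_succ k).isInfix

def shiftedW (p : ℕ × ℕ) : List ℕ := (W p.2).map (· + 2 * p.1)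

def squareIndices (k : ℕ) : Set (ℕ × ℕ) := {p | 2 * p.1 + p.2 + 2 ≤ k}

theorem mem_squareIndices {k : ℕ} {p : ℕ × ℕ} :
    p ∈ squareIndices k ↔ 2 * p.1 + p.2 + 2 ≤ k :=
  Iff.rfl

theorem shift_shiftedW (i j : ℕ) : shift (shiftedW (i, j)) = shiftedW (i + 1, j) := by
  simp only [shift, shiftedW, map_map]
  exact map_congr_left fun _ _ ↦ by simp only [Function.comp_apply]; omega

theorem shiftedW_ne_nil (p : ℕ × ℕ) : shiftedW p ≠ [] := by
  simp [shiftedW, W_ne_nil]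

theorem shiftedW_injective : Function.Injective shiftedW := by
  rintro ⟨i, j⟩ ⟨i', j'⟩ h
  obtain rfl : j = j' :=
    length_W_strictMono.injective (by simpa [shiftedW] using congrArg length h)
  have := congrArg head? h
  rw [shiftedW, shiftedW, W_eq_zero_cons] at this
  obtain rfl : i = i' := by simpa using this
  rfl

theorem shiftedW_square_infix_concatW {k : ℕ} {p : ℕ × ℕ} (hp : p ∈ squareIndices k) :
    shiftedW p ++ shiftedW p <:+: concatW k := by
  obtain ⟨i, j⟩ := p
  rw [mem_squareIndices] at hp
  induction i generalizing k with
  | zero =>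
    have h₁ : W j ++ W j <+: W j ++ W (j + 1) :=
      (prefix_append_right_inj _).mpr (W_prefix_W_succ j)
    have h₂ : W j ++ W (j + 1) <:+ concatW (j + 2) := by
      rw [concatW_succ, concatW_succ, append_assoc]; exact suffix_append _ _
    simpa [shiftedW] using
      (h₁.isInfix.trans h₂.isInfix).trans (concatW_prefix_of_le (by omega)).isInfix
  | succ i ih =>
    obtain ⟨k, rfl⟩ : ∃ k', k = k' + 2 := ⟨k - 2, by omega⟩
    rw [← shift_shiftedW, ← shift_append]
    have h : W (k + 1) <:+: concatW (k + 2) := by rw [concatW_succ]; exact infix_append_right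
    exact ((ih (by omega)).map _).trans ((shift_concatW_suffix_W_succ k).isInfix.trans h)

theorem squares_concatW (k : ℕ) :
    squares (concatW k) = (fun p ↦ shiftedW p ++ shiftedW p) '' squareIndices k := by
  induction k using Nat.strong_induction_on with
  | _ k ih =>
  ext u
  constructor
  · rintro ⟨⟨v, hv, rfl⟩, h⟩
    by_cases h0 : 0 ∈ v
    · obtain ⟨c, hc, rfl⟩ := eq_W_of_square_infix_concatW h h0
      exact ⟨(0, c), mem_squareIndices.mpr (by omega), by simp [shiftedW]⟩
    have h0' : 0 ∉ v ++ v := by simpa using h0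
    rcases k with _ | _ | k
    · exact absurd (infix_nil.mp (h : v ++ v <:+: [])) (by simp [hv])
    · exact absurd (infix_nil.mp (infix_tail_W_of_zero_notMem h h0' : v ++ v <:+: []))
        (by simp [hv])
    obtain ⟨v', rfl, hv'⟩ :=
      exists_shift_of_square_infix_tail_W (infix_tail_W_of_zero_notMem h h0')
    have : v' ++ v' ∈ squares (concatW k) := ⟨⟨v', by rintro rfl; exact hv rfl, rfl⟩, hv'⟩
    rw [ih k (by omega)] at this
    obtain ⟨⟨i, j⟩, hij, hv'eq⟩ := this
    refine ⟨(i + 1, j), mem_squareIndices.mpr (by rw [mem_squareIndices] at hij; omega), ?_⟩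
    dsimp only at hv'eq ⊢
    rw [← shift_shiftedW, ← shift_append, hv'eq, shift_append]
  · rintro ⟨p, hp, rfl⟩
    exact ⟨⟨shiftedW p, shiftedW_ne_nil p, rfl⟩, shiftedW_square_infix_concatW hp⟩

theorem squareIndices_finite (k : ℕ) : (squareIndices k).Finite :=
  ((Set.finite_Iic k).prod (Set.finite_Iic k)).subset fun p hp ↦ by
    rw [mem_squareIndices] at hp
    exact ⟨Set.mem_Iic.mpr (by omega), Set.mem_Iic.mpr (by omega)⟩

theorem squareIndices_add_two (k : ℕ) :
    squareIndices (k + 2) = Prod.mk 0 '' Set.Iic k ∪ Prod.map (· + 1) id '' squareIndices k := by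
  ext ⟨i, j⟩
  simp only [mem_squareIndices, Set.mem_union, Set.mem_image, Set.mem_Iic, Prod.mk.injEq,
    Prod.map, id, Prod.exists]
  constructor
  · rcases i with _ | i
    · exact fun h ↦ .inl ⟨j, by omega, rfl, rfl⟩
    · exact fun h ↦ .inr ⟨i, j, by omega, rfl, rfl⟩
  · rintro (⟨j, hj, rfl, rfl⟩ | ⟨i, j, hij, rfl, rfl⟩) <;> omega

theorem ncard_squareIndices : ∀ k, (squareIndices k).ncard = k / 2 * ((k + 1) / 2)
  | 0 | 1 => by
    rw [Set.ncard_eq_zero (squareIndices_finite _)]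
    ext p
    simp [mem_squareIndices]
  | k + 2 => by
    have hdisj : Disjoint (Prod.mk 0 '' Set.Iic k) (Prod.map (· + 1) id '' squareIndices k) := by
      rw [Set.disjoint_left]
      rintro _ ⟨j, -, rfl⟩ ⟨⟨i, j'⟩, -, h⟩
      simp [Prod.map] at h
    rw [squareIndices_add_two, Set.ncard_union_eq hdisj ((Set.finite_Iic k).image _)
        ((squareIndices_finite k).image _),
      Set.ncard_image_of_injective _ (Prod.mk_right_injective 0),
      Set.ncard_image_of_injective _ ((add_left_injective 1).prodMap Function.injective_id),
      Set.ncard_Iic_nat, ncard_squareIndices k]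
    have h₁ : (k + 2) / 2 = k / 2 + 1 := by omega
    have h₂ : (k + 2 + 1) / 2 = (k + 1) / 2 + 1 := by omega
    have h₃ : k / 2 + (k + 1) / 2 = k := by omega
    rw [h₁, h₂]
    linarith

/-- For every `k ≥ 0`, the number of distinct square factors of `W (k+1)`
equals `⌊k/2⌋ * ⌈k/2⌉`. -/
theorem zww_distinct_squares_count : ∀ k : ℕ,
    {u : List ℕ | (∃ v : List ℕ, v ≠ [] ∧ u = v ++ v) ∧ u <:+: W (k + 1)}.ncard =
      (k / 2) * ((k + 1) / 2) := by
  intro k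
  change (squares (W (k + 1))).ncard = _
  have hinj : Function.Injective fun p ↦ shift (shiftedW p ++ shiftedW p) :=
    shift_injective.comp (append_self_injective.comp shiftedW_injective)
  rw [squares_W_succ, squares_concatW, Set.image_image, Set.ncard_image_of_injective _ hinj,
    ncard_squareIndices]
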